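/- (Unwinding II) Let ε_s, ε_o, ε_l ≥ 0 and let t ≥ 0 be a natural number. Suppose that for each agent a ∈ A there is a pseudo-distance δ_a on reachable density operators (symmetric, nonnegative, zero on the diagonal, satisfying the triangle inequality) such that: (approximate step consistency) δ_a(𝓔_{b,c}(ρ), 𝓔_{b,c}(σ)) ≤ δ_a(ρ,σ) + ε_s for all b ∈ A, c ∈ C, and reachable ρ, σ; (approximate observation consistency) d_a(ρ,σ) ≤ δ_a(ρ,σ) + ε_o for all reachable ρ, σ; and (approximate local respect of ↝) if ¬(b ↝ a) then δ_a(ρ, 𝓔_{b,c}(ρ)) ≤ ε_l for all c ∈ C and reachable ρ. Then K_t(𝕊,↝) ≤ ε_o + t·max{ε_s, ε_l}. -/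

import Mathlib

open scoped Classical ComplexOrder
open Matrix Kronecker

noncomputable section

/-- A density operator: positive semidefinite with trace 1. -/
def IsDensity {d : Type} [Fintype d] [DecidableEq d] (ρ : Matrix d d ℂ) : Prop :=
  ρ.PosSemidef ∧ ρ.trace = 1

/-- A super-operator: a linear, positive, trace-preserving map on matrices. -/
def IsSuperOp {d : Type} [Fintype d] [DecidableEq d]
    (F : Matrix d d ℂ → Matrix d d ℂ) : Prop :=
  IsLinearMap ℂ F ∧ (∀ ρ : Matrix d d ℂ, ρ.PosSemidef → (F ρ).PosSemidef) ∧
    (∀ ρ : Matrix d d ℂ, (F ρ).trace = ρ.trace)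

/-- A finite family of matrices (the data of a measurement). -/
structure PMeas (d : Type) where
  m : ℕ
  E : Fin m → Matrix d d ℂ

/-- The family is a POVM: positive semidefinite elements summing to the identity. -/
def PMeas.IsPOVM {d : Type} [Fintype d] [DecidableEq d] (P : PMeas d) : Prop :=
  (∀ i, (P.E i).PosSemidef) ∧ ∑ i, P.E i = 1

/-- The distance between outcome distributions of a measurement on two states. -/
def dE {d : Type} [Fintype d] (P : PMeas d) (ρ σ : Matrix d d ℂ) : ℝ :=
  (1 / 2) * ∑ i, ‖(P.E i * ρ).trace - (P.E i * σ).trace‖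

/-- The measurement pseudo-distance induced by a set of measurements. -/
def dM {d : Type} [Fintype d] (M : Set (PMeas d)) (ρ σ : Matrix d d ℂ) : ℝ :=
  sSup { x | ∃ P ∈ M, x = dE P ρ σ }

/-- A quantum system: initial state, agents, commands, super-operators, measurements. -/
structure QSystem (Agent Cmd d : Type) where
  ρ0 : Matrix d d ℂ
  A : Set Agent
  C : Set Cmd
  Ecmd : Agent → Cmd → Matrix d d ℂ → Matrix d d ℂ
  M : Agent → Set (PMeas d)

/-- Well-formedness: the initial state is a density operator, commands act as
super-operators, and agents measure with POVMs. -/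
def QSystem.WellFormed {Agent Cmd d : Type} [Fintype d] [DecidableEq d]
    (S : QSystem Agent Cmd d) : Prop :=
  IsDensity S.ρ0 ∧ (∀ a ∈ S.A, ∀ c ∈ S.C, IsSuperOp (S.Ecmd a c)) ∧
    (∀ a ∈ S.A, ∀ P ∈ S.M a, P.IsPOVM)

/-- Execution of a finite action sequence (composition of super-operators, in order). -/
def QSystem.run {Agent Cmd d : Type} (S : QSystem Agent Cmd d)
    (α : List (Agent × Cmd)) (ρ : Matrix d d ℂ) : Matrix d d ℂ :=
  α.foldl (fun τ p => S.Ecmd p.1 p.2 τ) ρ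

/-- A sequence over A × C. -/
def QSystem.Valid {Agent Cmd d : Type} (S : QSystem Agent Cmd d)
    (α : List (Agent × Cmd)) : Prop :=
  ∀ p ∈ α, p.1 ∈ S.A ∧ p.2 ∈ S.C

/-- `purge G D α` deletes from `α` every pair `(a, c)` with `a ∈ G` and `c ∈ D`. -/
def purge {Agent Cmd : Type} (G : Set Agent) (D : Set Cmd) :
    List (Agent × Cmd) → List (Agent × Cmd)
  | [] => []
  | p :: rest => if p.1 ∈ G ∧ p.2 ∈ D then purge G D rest else p :: purge G D rest

/-- A reachable density operator. -/
def QSystem.Reachable {Agent Cmd d : Type} (S : QSystem Agent Cmd d)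
    (ρ : Matrix d d ℂ) : Prop :=
  ∃ α, S.Valid α ∧ S.run α S.ρ0 = ρ

/-- `∇ a`: the set of agents from which information may not flow to `a`. -/
def nabla {Agent : Type} (pol : Agent → Agent → Prop) (a : Agent) : Set Agent :=
  { b | ¬ pol b a }

/-- The security degree `K(𝕊,↝)`. -/
def Kdeg {Agent Cmd d : Type} [Fintype d] (S : QSystem Agent Cmd d)
    (pol : Agent → Agent → Prop) : ℝ :=
  sSup { x | ∃ a ∈ S.A, ∃ α, S.Valid α ∧
    x = dM (S.M a) (S.run α S.ρ0) (S.run (purge (nabla pol a) Set.univ α) S.ρ0) }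

/-- The `t`-bounded security degree `K_t(𝕊,↝)`. -/
def Kt {Agent Cmd d : Type} [Fintype d] (S : QSystem Agent Cmd d)
    (pol : Agent → Agent → Prop) (t : ℕ) : ℝ :=
  sSup { x | ∃ a ∈ S.A, ∃ α, S.Valid α ∧ α.length ≤ t ∧
    x = dM (S.M a) (S.run α S.ρ0) (S.run (purge (nabla pol a) Set.univ α) S.ρ0) }

/-- The interference degree `Int(G₁, D | G₂)`. -/
def IntDeg {Agent Cmd d : Type} [Fintype d] (S : QSystem Agent Cmd d)
    (G1 : Set Agent) (D : Set Cmd) (G2 : Set Agent) : ℝ :=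
  sSup { x | ∃ a ∈ G2, ∃ α, S.Valid α ∧
    x = dM (S.M a) (S.run α S.ρ0) (S.run (purge G1 D α) S.ρ0) }

/-- Trace distance `d(ρ,σ) = (1/2)·tr √((ρ−σ)†(ρ−σ))`. -/
def traceDist {d : Type} [Fintype d] [DecidableEq d] (ρ σ : Matrix d d ℂ) : ℝ :=
  (1 / 2) * (((Matrix.posSemidef_conjTranspose_mul_self (ρ - σ)).1.eigenvectorUnitary.1 *
    diagonal (fun i => ((Real.sqrt ((Matrix.posSemidef_conjTranspose_mul_self (ρ - σ)).1.eigenvalues i) : ℝ) : ℂ)) *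
    (star (Matrix.posSemidef_conjTranspose_mul_self (ρ - σ)).1.eigenvectorUnitary : Matrix d d ℂ)).trace).re

end
/-!
Fix an agent `a` and compare the run of `α` with the run of its purge. A command kept by the
purge is applied on both sides, and step consistency lets the pseudo-distance `δ a` grow by at
most `ε_s`; a purged command moves only the full run, and local respect together with the
triangle inequality let it grow by at most `ε_l`. Starting from `δ a ρ₀ ρ₀ = 0`, after at most
`t` steps the two runs are `t · max ε_s ε_l` apart, and observation consistency adds `ε_o`.
-/

section Purge

variable {Agent Cmd : Type} (G : Set Agent) (D : Set Cmd)

theorem purge_cons_of_mem {p : Agent × Cmd} (hp : p.1 ∈ G ∧ p.2 ∈ D) (α : List (Agent × Cmd)) :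
    purge G D (p :: α) = purge G D α :=
  if_pos hp

theorem purge_cons_of_not_mem {p : Agent × Cmd} (hp : ¬(p.1 ∈ G ∧ p.2 ∈ D))
    (α : List (Agent × Cmd)) : purge G D (p :: α) = p :: purge G D α :=
  if_neg hp

theorem purge_sublist : ∀ α : List (Agent × Cmd), (purge G D α).Sublist α
  | [] => List.Sublist.slnil
  | p :: α => by
    by_cases hp : p.1 ∈ G ∧ p.2 ∈ D
    · rw [purge_cons_of_mem G D hp]
      exact (purge_sublist α).cons p
    · rw [purge_cons_of_not_mem G D hp]
      exact (purge_sublist α).cons_cons p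

end Purge

namespace QSystem

variable {Agent Cmd d : Type} (S : QSystem Agent Cmd d)

theorem run_cons (p : Agent × Cmd) (α : List (Agent × Cmd)) (ρ : Matrix d d ℂ) :
    S.run (p :: α) ρ = S.run α (S.Ecmd p.1 p.2 ρ) :=
  rfl

theorem valid_cons {p : Agent × Cmd} {α : List (Agent × Cmd)} :
    S.Valid (p :: α) ↔ (p.1 ∈ S.A ∧ p.2 ∈ S.C) ∧ S.Valid α :=
  List.forall_mem_cons

theorem reachable_ρ0 : S.Reachable S.ρ0 :=
  ⟨[], fun _ hp => absurd hp List.not_mem_nil, rfl⟩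

variable {S}

theorem Valid.of_sublist {α β : List (Agent × Cmd)}
    (hα : S.Valid α) (hβ : β.Sublist α) : S.Valid β :=
  fun p hp => hα p (hβ.subset hp)

theorem Reachable.run {α : List (Agent × Cmd)} {ρ : Matrix d d ℂ}
    (hρ : S.Reachable ρ) (hα : S.Valid α) : S.Reachable (S.run α ρ) := by
  obtain ⟨β, hβ, rfl⟩ := hρ
  refine ⟨β ++ α, fun p hp => ?_, List.foldl_append⟩
  exact (List.mem_append.1 hp).elim (hβ p) (hα p)

theorem Reachable.ecmd {b : Agent} {c : Cmd} {ρ : Matrix d d ℂ}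
    (hρ : S.Reachable ρ) (hb : b ∈ S.A) (hc : c ∈ S.C) : S.Reachable (S.Ecmd b c ρ) :=
  hρ.run (α := [(b, c)]) (S.valid_cons.2 ⟨⟨hb, hc⟩, fun _ hp => absurd hp List.not_mem_nil⟩)

theorem Reachable.run_purge {α : List (Agent × Cmd)} {ρ : Matrix d d ℂ} (hρ : S.Reachable ρ)
    (hα : S.Valid α) (G : Set Agent) (D : Set Cmd) : S.Reachable (S.run (purge G D α) ρ) :=
  hρ.run (hα.of_sublist (purge_sublist G D α))

theorem dist_run_run_purge_le (δ : Matrix d d ℂ → Matrix d d ℂ → ℝ) (G : Set Agent)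
    (D : Set Cmd) {εs εl : ℝ}
    (hsym : ∀ ρ σ, S.Reachable ρ → S.Reachable σ → δ ρ σ = δ σ ρ)
    (htri : ∀ ρ σ τ, S.Reachable ρ → S.Reachable σ → S.Reachable τ →
      δ ρ τ ≤ δ ρ σ + δ σ τ)
    (hstep : ∀ b ∈ S.A, ∀ c ∈ S.C, ∀ ρ σ, S.Reachable ρ → S.Reachable σ →
      δ (S.Ecmd b c ρ) (S.Ecmd b c σ) ≤ δ ρ σ + εs)
    (hlocal : ∀ b ∈ S.A, b ∈ G → ∀ c ∈ S.C, c ∈ D → ∀ ρ, S.Reachable ρ →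
      δ ρ (S.Ecmd b c ρ) ≤ εl)
    {α : List (Agent × Cmd)} (hα : S.Valid α) {ρ σ : Matrix d d ℂ}
    (hρ : S.Reachable ρ) (hσ : S.Reachable σ) :
    δ (S.run α ρ) (S.run (purge G D α) σ) ≤ δ ρ σ + α.length * max εs εl := by
  induction α generalizing ρ σ with
  | nil => simp [QSystem.run, purge]
  | cons p α ih =>
    obtain ⟨⟨hb, hc⟩, hα⟩ := S.valid_cons.1 hα
    have hρ' := hρ.ecmd hb hc
    rw [run_cons, List.length_cons, Nat.cast_succ]
    by_cases hp : p.1 ∈ G ∧ p.2 ∈ D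
    · rw [purge_cons_of_mem G D hp]
      calc δ (S.run α (S.Ecmd p.1 p.2 ρ)) (S.run (purge G D α) σ)
          ≤ δ (S.Ecmd p.1 p.2 ρ) σ + α.length * max εs εl := ih hα hρ' hσ
        _ ≤ δ (S.Ecmd p.1 p.2 ρ) ρ + δ ρ σ + α.length * max εs εl := by
          gcongr; exact htri _ _ _ hρ' hρ hσ
        _ ≤ εl + δ ρ σ + α.length * max εs εl := by
          gcongr; exact hsym _ _ hρ' hρ ▸ hlocal _ hb hp.1 _ hc hp.2 ρ hρ
        _ ≤ δ ρ σ + (α.length + 1) * max εs εl := by linarith [le_max_right εs εl]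
    · rw [purge_cons_of_not_mem G D hp, run_cons]
      calc δ (S.run α (S.Ecmd p.1 p.2 ρ)) (S.run (purge G D α) (S.Ecmd p.1 p.2 σ))
          ≤ δ (S.Ecmd p.1 p.2 ρ) (S.Ecmd p.1 p.2 σ) + α.length * max εs εl :=
            ih hα hρ' (hσ.ecmd hb hc)
        _ ≤ δ ρ σ + εs + α.length * max εs εl := by
          gcongr; exact hstep _ hb _ hc ρ σ hρ hσ
        _ ≤ δ ρ σ + (α.length + 1) * max εs εl := by linarith [le_max_left εs εl]

end QSystem

noncomputable section

theorem unwinding_II_general {Agent Cmd d : Type} [Fintype d]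
    (S : QSystem Agent Cmd d)
    (pol : Agent → Agent → Prop)
    (εs εo εl : ℝ) (hεs : 0 ≤ εs) (hεo : 0 ≤ εo) (t : ℕ)
    (δ : Agent → Matrix d d ℂ → Matrix d d ℂ → ℝ)
    (hdiag : ∀ a ∈ S.A, ∀ ρ, S.Reachable ρ → δ a ρ ρ = 0)
    (hsym : ∀ a ∈ S.A, ∀ ρ σ, S.Reachable ρ → S.Reachable σ → δ a ρ σ = δ a σ ρ)
    (htri : ∀ a ∈ S.A, ∀ ρ σ τ, S.Reachable ρ → S.Reachable σ → S.Reachable τ →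
      δ a ρ τ ≤ δ a ρ σ + δ a σ τ)
    (hstep : ∀ a ∈ S.A, ∀ b ∈ S.A, ∀ c ∈ S.C, ∀ ρ σ, S.Reachable ρ → S.Reachable σ →
      δ a (S.Ecmd b c ρ) (S.Ecmd b c σ) ≤ δ a ρ σ + εs)
    (hobs : ∀ a ∈ S.A, ∀ ρ σ, S.Reachable ρ → S.Reachable σ →
      dM (S.M a) ρ σ ≤ δ a ρ σ + εo)
    (hlocal : ∀ a ∈ S.A, ∀ b ∈ S.A, ¬ pol b a → ∀ c ∈ S.C, ∀ ρ, S.Reachable ρ →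
      δ a ρ (S.Ecmd b c ρ) ≤ εl) :
    Kt S pol t ≤ εo + t * max εs εl := by
  have hmax : 0 ≤ max εs εl := le_max_of_le_left hεs
  refine Real.sSup_le ?_ (by positivity)
  rintro x ⟨a, ha, α, hα, hlen, rfl⟩
  have hρ0 := S.reachable_ρ0
  have hunwind := S.dist_run_run_purge_le (δ a) (nabla pol a) Set.univ (hsym a ha) (htri a ha)
    (hstep a ha) (fun b hb hba c hc _ => hlocal a ha b hb hba c hc) hα hρ0 hρ0
  calc dM (S.M a) (S.run α S.ρ0) (S.run (purge (nabla pol a) Set.univ α) S.ρ0)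
      ≤ δ a (S.run α S.ρ0) (S.run (purge (nabla pol a) Set.univ α) S.ρ0) + εo :=
        hobs a ha _ _ (hρ0.run hα) (hρ0.run_purge hα _ _)
    _ ≤ δ a S.ρ0 S.ρ0 + α.length * max εs εl + εo := by gcongr
    _ ≤ εo + t * max εs εl := by
      rw [hdiag a ha _ hρ0, zero_add, add_comm]
      gcongr

/-- **Unwinding II.** Approximate step consistency, approximate observation consistency
and approximate local respect of the policy bound the `t`-bounded security degree by
`ε_o + t·max{ε_s, ε_l}`. -/
theorem unwinding_II {Agent Cmd d : Type} [Fintype d] [DecidableEq d] [Nonempty d]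
    (S : QSystem Agent Cmd d) (hS : S.WellFormed)
    (pol : Agent → Agent → Prop) (hpol : ∀ a ∈ S.A, pol a a)
    (εs εo εl : ℝ) (hεs : 0 ≤ εs) (hεo : 0 ≤ εo) (hεl : 0 ≤ εl) (t : ℕ)
    (δ : Agent → Matrix d d ℂ → Matrix d d ℂ → ℝ)
    (hnonneg : ∀ a ∈ S.A, ∀ ρ σ, S.Reachable ρ → S.Reachable σ → 0 ≤ δ a ρ σ)
    (hdiag : ∀ a ∈ S.A, ∀ ρ, S.Reachable ρ → δ a ρ ρ = 0)
    (hsym : ∀ a ∈ S.A, ∀ ρ σ, S.Reachable ρ → S.Reachable σ → δ a ρ σ = δ a σ ρ)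
    (htri : ∀ a ∈ S.A, ∀ ρ σ τ, S.Reachable ρ → S.Reachable σ → S.Reachable τ →
      δ a ρ τ ≤ δ a ρ σ + δ a σ τ)
    (hstep : ∀ a ∈ S.A, ∀ b ∈ S.A, ∀ c ∈ S.C, ∀ ρ σ, S.Reachable ρ → S.Reachable σ →
      δ a (S.Ecmd b c ρ) (S.Ecmd b c σ) ≤ δ a ρ σ + εs)
    (hobs : ∀ a ∈ S.A, ∀ ρ σ, S.Reachable ρ → S.Reachable σ →
      dM (S.M a) ρ σ ≤ δ a ρ σ + εo)
    (hlocal : ∀ a ∈ S.A, ∀ b ∈ S.A, ¬ pol b a → ∀ c ∈ S.C, ∀ ρ, S.Reachable ρ →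
      δ a ρ (S.Ecmd b c ρ) ≤ εl) :
    Kt S pol t ≤ εo + t * max εs εl :=
  unwinding_II_general S pol εs εo εl hεs hεo t δ hdiag hsym htri hstep hobs hlocal

end
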